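/- For k ≥ 1, the graph H^(k) = I_{k+2} ∨ (K_{k+3} ∪ K_{2k}) on 4k+5 vertices is k½-extendable. -/

import Mathlib

open SimpleGraph

/-- `G` has a matching with exactly `k` edges. -/
def HasMatchingOfSize {V : Type*} (G : SimpleGraph V) (k : ℕ) : Prop :=
  ∃ M : G.Subgraph, M.IsMatching ∧ M.edgeSet.ncard = k

/-- `G` is `k`-extendable: connected, has a matching of size `k`, and every
matching of size `k` extends to a perfect matching. -/
def Extendable {V : Type*} (G : SimpleGraph V) (k : ℕ) : Prop :=
  G.Connected ∧ HasMatchingOfSize G k ∧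
    ∀ M : G.Subgraph, M.IsMatching → M.edgeSet.ncard = k →
      ∃ M' : G.Subgraph, M ≤ M' ∧ M'.IsPerfectMatching

/-- `G` is `n`-factor-critical: deleting any `n` vertices leaves a graph with
a perfect matching. -/
def FactorCritical {V : Type*} [Fintype V] (G : SimpleGraph V) (n : ℕ) : Prop :=
  ∀ S : Finset V, S.card = n →
    ∃ M : (G.induce ((↑S : Set V)ᶜ)).Subgraph, M.IsPerfectMatching

/-- `G` is `k½`-extendable: for every vertex `v`, `G - v` has a matching of
size `k`, and every matching of size `k` in `G - v` extends to a perfect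
matching of `G - v`. -/
def HalfExtendable {V : Type*} (G : SimpleGraph V) (k : ℕ) : Prop :=
  ∀ v : V,
    HasMatchingOfSize (G.induce ({v}ᶜ : Set V)) k ∧
    ∀ M : (G.induce ({v}ᶜ : Set V)).Subgraph, M.IsMatching → M.edgeSet.ncard = k →
      ∃ M' : (G.induce ({v}ᶜ : Set V)).Subgraph, M ≤ M' ∧ M'.IsPerfectMatching

/-- Vertex type of `I_{k+2} ∨ (K_{k+3} ∪ K_{2k})`. -/
abbrev HkV (k : ℕ) := Fin (k + 2) ⊕ (Fin (k + 3) ⊕ Fin (2 * k))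

/-- The graph `H^(k) = I_{k+2} ∨ (K_{k+3} ∪ K_{2k})`: all edges between the
independent set and the two cliques, plus complete graphs on `Fin (k+3)` and `Fin (2k)`. -/
def Hk (k : ℕ) : SimpleGraph (HkV k) :=
  SimpleGraph.fromRel (fun x y =>
    x.isLeft ≠ y.isLeft ∨
    (∃ a b, x = Sum.inr (Sum.inl a) ∧ y = Sum.inr (Sum.inl b)) ∨
    (∃ a b, x = Sum.inr (Sum.inr a) ∧ y = Sum.inr (Sum.inr b)))

/-!
Delete a vertex `v`. A matching `M` with `k` edges covers at most `k` vertices of the independent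
part `I`, since each of them is matched into the cliques. Hence some vertex of `I` stays uncovered,
and the uncovered vertices of `I` are not more numerous than those of the cliques. These are matched
into the two cliques, split so that the remainder of each clique is even and can be paired off
inside it. The part sizes `k + 2`, `k + 3`, `2k` are just large enough for both counts.
-/
lemma Set.ncard_preimage_val {V : Type*} (s A : Set V) :
    (Subtype.val ⁻¹' A : Set s).ncard = (A ∩ s).ncard := by
  rw [← Subtype.preimage_coe_inter_self,
    Set.ncard_preimage_of_injective_subset_range Subtype.val_injective (by simp)]

namespace SimpleGraph

variable {V : Type*} {G : SimpleGraph V}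

namespace Subgraph

lemma IsMatching.ncard_verts [Finite V] {M : G.Subgraph} (hM : M.IsMatching) :
    M.verts.ncard = 2 * M.edgeSet.ncard := by
  classical
  have := Fintype.ofFinite V
  rw [← M.image_coe_edgeSet_coe, Set.ncard_image_of_injective _
    (Sym2.map.injective Subtype.val_injective), ← coe_edgeFinset, Set.ncard_coe_finset,
    ← M.coe.sum_degrees_eq_twice_card_edges]
  simp only [← card_neighborSet_eq_degree, Fintype.card_eq_nat_card]
  have hdeg : ∀ v : M.verts, Nat.card (M.coe.neighborSet v) = 1 := fun v => by
    rw [← Fintype.card_eq_nat_card, card_neighborSet_eq_degree, M.coe_degree]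
    convert isMatching_iff_forall_degree.mp hM v v.2
  rw [Finset.sum_congr rfl fun v _ => hdeg v, ← Nat.card_coe_set_eq]
  simp

-- Each covered vertex of `A` has its partner outside `A`.
lemma IsMatching.two_mul_ncard_inter_le [Finite V] {M : G.Subgraph} (hM : M.IsMatching)
    {A : Set V} (hA : G.IsIndepSet A) : 2 * (A ∩ M.verts).ncard ≤ M.verts.ncard := by
  choose! p hp using fun v (hv : v ∈ M.verts) => (hM hv).exists
  have hle : (M.verts ∩ A).ncard ≤ (M.verts \ A).ncard :=
    Set.ncard_le_ncard_of_injOn p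
      (fun v hv => ⟨M.edge_vert (hp v hv.1).symm,
        fun hpA => hA hv.2 hpA (hp v hv.1).ne (hp v hv.1).adj_sub⟩)
      (fun v hv w hw hvw => hM.eq_of_adj_right (hp v hv.1) (hvw ▸ hp w hw.1))
  have := Set.ncard_inter_add_ncard_sdiff_eq_ncard M.verts A
  rw [Set.inter_comm]
  omega

lemma IsMatching.isPerfectMatching_sup {M N : G.Subgraph} (hM : M.IsMatching)
    (hN : N.IsMatching) (hNv : N.verts = M.vertsᶜ) : (M ⊔ N).IsPerfectMatching := by
  refine ⟨hM.sup hN ?_, fun v => ?_⟩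
  · rw [hM.support_eq_verts, hN.support_eq_verts, hNv]
    exact disjoint_compl_right
  · rw [verts_sup, hNv]
    exact em (v ∈ M.verts)

end Subgraph

lemma exists_isMatching_verts_eq_union {s t : Set V} (hst : Disjoint s t)
    (hs : ∃ M : G.Subgraph, M.verts = s ∧ M.IsMatching)
    (ht : ∃ M : G.Subgraph, M.verts = t ∧ M.IsMatching) :
    ∃ M : G.Subgraph, M.verts = s ∪ t ∧ M.IsMatching := by
  obtain ⟨M, rfl, hM⟩ := hs
  obtain ⟨N, rfl, hN⟩ := ht
  exact ⟨M ⊔ N, rfl, hM.sup hN (by rwa [hM.support_eq_verts, hN.support_eq_verts])⟩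

lemma exists_isMatching_verts_eq_union_of_ncard_eq [Finite V] {s t : Set V}
    (hst : Disjoint s t) (hcard : s.ncard = t.ncard) (hadj : ∀ a ∈ s, ∀ b ∈ t, G.Adj a b) :
    ∃ M : G.Subgraph, M.verts = s ∪ t ∧ M.IsMatching := by
  obtain ⟨f⟩ : Nonempty (s ≃ t) := Finite.card_eq.mp (by simpa [Nat.card_coe_set_eq] using hcard)
  exact Subgraph.IsMatching.exists_of_disjoint_sets_of_equiv hst f
    fun a => hadj a a.2 (f a) (f a).2

lemma exists_isMatching_verts_eq_union_of_isClique [Finite V] {s t : Set V}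
    (hst : Disjoint s t) (hle : s.ncard ≤ t.ncard) (heven : Even (t.ncard - s.ncard))
    (hadj : ∀ a ∈ s, ∀ b ∈ t, G.Adj a b) (ht : G.IsClique t) :
    ∃ M : G.Subgraph, M.verts = s ∪ t ∧ M.IsMatching := by
  obtain ⟨t₁, ht₁, hcard⟩ := Set.exists_subset_card_eq hle
  have hrest : (t \ t₁).ncard = t.ncard - s.ncard := by rw [Set.ncard_sdiff ht₁, hcard]
  rw [← Set.union_sdiff_cancel ht₁, ← Set.union_assoc]
  refine exists_isMatching_verts_eq_union ?_
    (exists_isMatching_verts_eq_union_of_ncard_eq (hst.mono_right ht₁) hcard.symm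
      fun a ha b hb => hadj a ha b (ht₁ hb))
    (((ht.subset Set.sdiff_subset).even_iff_exists_isMatching (Set.toFinite _)).mp
      (hrest ▸ heven))
  exact Set.disjoint_union_left.mpr ⟨hst.mono_right Set.sdiff_subset, Set.disjoint_sdiff_right⟩

lemma hasMatchingOfSize_of_le_ncard [Finite V] {s t : Set V} (hst : Disjoint s t)
    (hadj : ∀ a ∈ s, ∀ b ∈ t, G.Adj a b) {k : ℕ} (hs : k ≤ s.ncard) (ht : k ≤ t.ncard) :
    HasMatchingOfSize G k := by
  obtain ⟨s₁, hs₁, hs₁k⟩ := Set.exists_subset_card_eq hs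
  obtain ⟨t₁, ht₁, ht₁k⟩ := Set.exists_subset_card_eq ht
  obtain ⟨M, hMv, hM⟩ := exists_isMatching_verts_eq_union_of_ncard_eq (hst.mono hs₁ ht₁)
    (hs₁k.trans ht₁k.symm) fun a ha b hb => hadj a (hs₁ ha) b (ht₁ hb)
  refine ⟨M, hM, ?_⟩
  have hverts := hM.ncard_verts
  rw [hMv, Set.ncard_union_eq (hst.mono hs₁ ht₁), hs₁k, ht₁k] at hverts
  omega

lemma _root_.Nat.exists_add_eq_even_sub_even_sub {a b c : ℕ} (ha : 1 ≤ a) (hle : a ≤ b + c)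
    (heven : Even (a + b + c)) :
    ∃ x y, x + y = a ∧ x ≤ b ∧ y ≤ c ∧ Even (b - x) ∧ Even (c - y) := by
  simp only [Nat.even_iff] at *
  by_cases hba : b ≤ a
  · exact ⟨b, a - b, by omega, le_rfl, by omega, by omega, by omega⟩
  by_cases hab : (a + b) % 2 = 0
  · exact ⟨a, 0, by omega, by omega, by omega, by omega, by omega⟩
  · exact ⟨a - 1, 1, by omega, by omega, by omega, by omega, by omega⟩

-- Match part of `A` into `B` and the rest into `C`, splitting `A` so that what is left of each
-- clique has even size, and pair off those leftovers inside the cliques.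
lemma exists_isMatching_verts_eq_of_join_cliques [Finite V] {A B C : Set V}
    (hAB : Disjoint A B) (hAC : Disjoint A C) (hBC : Disjoint B C)
    (hadjB : ∀ a ∈ A, ∀ b ∈ B, G.Adj a b) (hadjC : ∀ a ∈ A, ∀ c ∈ C, G.Adj a c)
    (hB : G.IsClique B) (hC : G.IsClique C) (hA : 1 ≤ A.ncard)
    (hle : A.ncard ≤ B.ncard + C.ncard) (heven : Even (A.ncard + B.ncard + C.ncard)) :
    ∃ M : G.Subgraph, M.verts = A ∪ B ∪ C ∧ M.IsMatching := by
  obtain ⟨x, y, hxy, hxB, hyC, hevB, hevC⟩ := Nat.exists_add_eq_even_sub_even_sub hA hle heven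
  obtain ⟨A₁, hA₁, hcard⟩ := Set.exists_subset_card_eq (show x ≤ A.ncard by omega)
  have hA₂ : (A \ A₁).ncard = y := by rw [Set.ncard_sdiff hA₁]; omega
  have hsplit : A ∪ B ∪ C = (A₁ ∪ B) ∪ (A \ A₁ ∪ C) := by
    rw [← Set.union_sdiff_cancel hA₁]
    ext; simp only [Set.mem_union, Set.mem_sdiff]; tauto
  rw [hsplit]
  refine exists_isMatching_verts_eq_union ?_
    (exists_isMatching_verts_eq_union_of_isClique (hAB.mono_left hA₁) (by omega)
      (by rwa [hcard]) (fun a ha b hb => hadjB a (hA₁ ha) b hb) hB)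
    (exists_isMatching_verts_eq_union_of_isClique (hAC.mono_left Set.sdiff_subset) (by omega)
      (by rwa [hA₂]) (fun a ha c hc => hadjC a ha.1 c hc) hC)
  exact Set.disjoint_union_left.mpr
    ⟨Set.disjoint_union_right.mpr ⟨Set.disjoint_sdiff_right, hAC.mono_left hA₁⟩,
     Set.disjoint_union_right.mpr ⟨(hAB.mono_left Set.sdiff_subset).symm, hBC⟩⟩

/-- `G` is `I ∨ (K₁ ∪ K₂)` with `I` independent and `K₁`, `K₂` cliques, except that edges
between `K₁` and `K₂` are left unconstrained. -/
structure IsIndepJoinCliques (G : SimpleGraph V) (I K₁ K₂ : Set V) : Prop where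
  disjoint_left : Disjoint I K₁
  disjoint_right : Disjoint I K₂
  disjoint_cliques : Disjoint K₁ K₂
  union_eq_univ : I ∪ K₁ ∪ K₂ = Set.univ
  isIndepSet : G.IsIndepSet I
  adj_left : ∀ a ∈ I, ∀ b ∈ K₁, G.Adj a b
  adj_right : ∀ a ∈ I, ∀ b ∈ K₂, G.Adj a b
  isClique_left : G.IsClique K₁
  isClique_right : G.IsClique K₂

namespace IsIndepJoinCliques

variable {I K₁ K₂ : Set V}

lemma ncard_inter_add [Finite V] (h : G.IsIndepJoinCliques I K₁ K₂) (S : Set V) :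
    (I ∩ S).ncard + (K₁ ∩ S).ncard + (K₂ ∩ S).ncard = S.ncard := by
  have hS : S = I ∩ S ∪ K₁ ∩ S ∪ K₂ ∩ S := by
    rw [← Set.union_inter_distrib_right, ← Set.union_inter_distrib_right, h.union_eq_univ,
      Set.univ_inter]
  conv_rhs => rw [hS]
  rw [Set.ncard_union_eq, Set.ncard_union_eq]
  · exact h.disjoint_left.mono Set.inter_subset_left Set.inter_subset_left
  · exact Set.disjoint_union_left.mpr
      ⟨h.disjoint_right.mono Set.inter_subset_left Set.inter_subset_left,
       h.disjoint_cliques.mono Set.inter_subset_left Set.inter_subset_left⟩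

lemma ncard_add_ncard_add_ncard [Finite V] (h : G.IsIndepJoinCliques I K₁ K₂) :
    I.ncard + K₁.ncard + K₂.ncard = Nat.card V := by
  simpa using h.ncard_inter_add Set.univ

lemma exists_isPerfectMatching_ge [Finite V] (h : G.IsIndepJoinCliques I K₁ K₂)
    (heven : Even (Nat.card V)) {M : G.Subgraph} (hM : M.IsMatching)
    (hI : M.edgeSet.ncard < I.ncard)
    (hK : I.ncard + 2 * M.edgeSet.ncard ≤ K₁.ncard + K₂.ncard) :
    ∃ M' : G.Subgraph, M ≤ M' ∧ M'.IsPerfectMatching := by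
  obtain ⟨N, hNv, hN⟩ : ∃ N : G.Subgraph,
      N.verts = I \ M.verts ∪ K₁ \ M.verts ∪ K₂ \ M.verts ∧ N.IsMatching := by
    have hcovered := h.ncard_inter_add M.verts
    have hsplitI := Set.ncard_inter_add_ncard_sdiff_eq_ncard I M.verts
    have hsplit₁ := Set.ncard_inter_add_ncard_sdiff_eq_ncard K₁ M.verts
    have hsplit₂ := Set.ncard_inter_add_ncard_sdiff_eq_ncard K₂ M.verts
    have hindep := hM.two_mul_ncard_inter_le h.isIndepSet
    have htotal := h.ncard_add_ncard_add_ncard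
    have hverts := hM.ncard_verts
    rw [Nat.even_iff] at heven
    refine exists_isMatching_verts_eq_of_join_cliques
      (h.disjoint_left.mono Set.sdiff_subset Set.sdiff_subset)
      (h.disjoint_right.mono Set.sdiff_subset Set.sdiff_subset)
      (h.disjoint_cliques.mono Set.sdiff_subset Set.sdiff_subset)
      (fun a ha b hb => h.adj_left a ha.1 b hb.1) (fun a ha b hb => h.adj_right a ha.1 b hb.1)
      (h.isClique_left.subset Set.sdiff_subset) (h.isClique_right.subset Set.sdiff_subset)
      (by omega) (by omega) (Nat.even_iff.mpr (by omega))
  refine ⟨M ⊔ N, le_sup_left, hM.isPerfectMatching_sup hN ?_⟩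
  rw [hNv, ← Set.union_sdiff_distrib, ← Set.union_sdiff_distrib, h.union_eq_univ,
    Set.compl_eq_univ_sdiff]

lemma induce (h : G.IsIndepJoinCliques I K₁ K₂) (s : Set V) :
    (G.induce s).IsIndepJoinCliques (Subtype.val ⁻¹' I) (Subtype.val ⁻¹' K₁)
      (Subtype.val ⁻¹' K₂) where
  disjoint_left := h.disjoint_left.preimage _
  disjoint_right := h.disjoint_right.preimage _
  disjoint_cliques := h.disjoint_cliques.preimage _
  union_eq_univ := by simp only [← Set.preimage_union, h.union_eq_univ, Set.preimage_univ]
  isIndepSet := fun _ ha _ hb hne => h.isIndepSet ha hb (Subtype.coe_injective.ne hne)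
  adj_left := fun a ha b hb => h.adj_left a ha b hb
  adj_right := fun a ha b hb => h.adj_right a ha b hb
  isClique_left := fun _ ha _ hb hne => h.isClique_left ha hb (Subtype.coe_injective.ne hne)
  isClique_right := fun _ ha _ hb hne => h.isClique_right ha hb (Subtype.coe_injective.ne hne)

theorem halfExtendable [Finite V] (h : G.IsIndepJoinCliques I K₁ K₂) {k : ℕ}
    (hodd : Odd (Nat.card V)) (hI : k + 2 ≤ I.ncard) (hK₁ : k + 1 ≤ K₁.ncard)
    (hK : I.ncard + 2 * k + 1 ≤ K₁.ncard + K₂.ncard) : HalfExtendable G k := by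
  intro v
  have hv := h.induce {v}ᶜ
  have hcard (A : Set V) : A.ncard - 1 ≤ (Subtype.val ⁻¹' A : Set ↥({v}ᶜ : Set V)).ncard ∧
      (Subtype.val ⁻¹' A : Set ↥({v}ᶜ : Set V)).ncard ≤ A.ncard := by
    rw [Set.ncard_preimage_val, ← Set.sdiff_eq]
    exact ⟨Set.pred_ncard_le_ncard_sdiff_singleton A v, Set.ncard_sdiff_singleton_le A v⟩
  have hcardV : Nat.card ↥({v}ᶜ : Set V) = Nat.card V - 1 := by
    rw [Nat.card_coe_set_eq, Set.ncard_compl, Set.ncard_singleton]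
  have hI' := hcard I
  have hK₁' := hcard K₁
  have hK₂' := hcard K₂
  have htotal := h.ncard_add_ncard_add_ncard
  have htotal' := hv.ncard_add_ncard_add_ncard
  obtain ⟨n, hn⟩ := hodd
  refine ⟨hasMatchingOfSize_of_le_ncard hv.disjoint_left hv.adj_left (by omega) (by omega),
    fun M hM hMk => hv.exists_isPerfectMatching_ge ⟨n, by omega⟩ hM (by omega) (by omega)⟩

end IsIndepJoinCliques

end SimpleGraph

lemma isIndepJoinCliques_Hk (k : ℕ) :
    (Hk k).IsIndepJoinCliques (Set.range Sum.inl) (Set.range (Sum.inr ∘ Sum.inl))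
      (Set.range (Sum.inr ∘ Sum.inr)) := by
  refine ⟨?_, ?_, ?_, ?_, ?_, ?_, ?_, ?_, ?_⟩ <;>
    simp [Set.disjoint_left, SimpleGraph.IsIndepSet, Set.Pairwise, IsClique, Hk,
      Set.eq_univ_iff_forall]

theorem stmt11_general (k : ℕ) : HalfExtendable (Hk k) k := by
  have hV : Nat.card (HkV k) = 4 * k + 5 := by
    simp only [Nat.card_eq_fintype_card, Fintype.card_sum, Fintype.card_fin]; ring
  have hI : (Set.range (Sum.inl : Fin (k + 2) → HkV k)).ncard = k + 2 := by
    simp [Set.ncard_range_of_injective Sum.inl_injective]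
  have hK₁ : (Set.range (Sum.inr ∘ Sum.inl : Fin (k + 3) → HkV k)).ncard = k + 3 := by
    simp [Set.ncard_range_of_injective (Sum.inr_injective.comp Sum.inl_injective)]
  have hK₂ : (Set.range (Sum.inr ∘ Sum.inr : Fin (2 * k) → HkV k)).ncard = 2 * k := by
    simp [Set.ncard_range_of_injective (Sum.inr_injective.comp Sum.inr_injective)]
  exact (isIndepJoinCliques_Hk k).halfExtendable ⟨2 * k + 2, by omega⟩ (by omega) (by omega)
    (by omega)

/-- for `k ≥ 1`, `H^(k)` is `k½`-extendable. -/
theorem stmt11 (k : ℕ) (hk : 1 ≤ k) : HalfExtendable (Hk k) k :=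
  stmt11_general k
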